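/- arXiv:1710.05760 — 2 statements merged into one kernel-verified Lean document; each statement's English description precedes it below -/
import Mathlib

section
/- The regularizing fractional Brownian motion 𝔹^H admits no Hölder continuous modification of any positive order: for every γ ∈ (0,1] there is no stochastic process Y = (Y_t)_{t∈[0,T]} with P(Y_t = 𝔹^H_t) = 1 for every t ∈ [0,T] whose sample paths are P-a.s. γ-Hölder continuous on [0,T]. -/
/-!
At each time `t` the `i`-th coordinate of `𝔹^H_t` is a centred Gaussian of variance
`V(t) = ∑ λₙ² t^{2Hₙ}`: the partial sums are Gaussian by the joint characteristic function, and
they converge almost surely because `E|B_t^{Hₙ,n,(i)}| ≤ 2 + T` uniformly in `n`. Fix `m` with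
`λₘ ≠ 0` and `Hₘ < γ`. Since `V(t) ≥ λₘ² t^{2Hₘ}`, the Gaussian density bound gives
`P(|𝔹^{H,(i)}_t| ≤ C t^γ) ≤ C t^{γ-Hₘ} / |λₘ| → 0` as `t → 0`. A `γ`-Hölder modification
vanishes at `0`, so along `tⱼ = T/(j+1)` it would satisfy `|𝔹^{H,(i)}_{tⱼ}| ≤ K tⱼ^γ` for all `j`
and some integer `K`; each of these countably many events is null.
-/

open MeasureTheory Real Filter Set
open scoped ENNReal NNReal BigOperators Classical

noncomputable section

/-- fBm covariance `R_H(t,s) = (t^{2H} + s^{2H} - |t-s|^{2H})/2`. -/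
def fbmCov (H t s : ℝ) : ℝ := (t ^ (2 * H) + s ^ (2 * H) - |t - s| ^ (2 * H)) / 2

/-- A family `B n` of independent `d`-dimensional fractional Brownian motions on `[0,T]`
with Hurst parameters `Hs n` (`Hs n ∈ (0,1/2)`, `Hs n ↓ 0`) and weights `lam`
(`0 < ∑|lam n| < ∞`, `lam n ≠ 0` for infinitely many `n`): the data of a regularizing
fractional Brownian motion.  Gaussianity, centering, independence of the components
and of the family, and the covariance structure are encoded through the joint
characteristic function. -/
structure IsRegFBM {Ω : Type*} [MeasurableSpace Ω] (d : ℕ) (T : ℝ) (P : Measure Ω)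
    (Hs lam : ℕ → ℝ) (B : ℕ → ℝ → Ω → EuclideanSpace ℝ (Fin d)) : Prop where
  Hmem : ∀ n, Hs n ∈ Set.Ioo (0 : ℝ) (1 / 2)
  Hanti : Antitone Hs
  Hlim : Filter.Tendsto Hs Filter.atTop (nhds 0)
  lam_summable : Summable fun n => |lam n|
  lam_pos : 0 < ∑' n, |lam n|
  lam_inf : {n | lam n ≠ 0}.Infinite
  meas : ∀ n t, Measurable (B n t)
  charFun : ∀ (k : ℕ) (ns : Fin k → ℕ) (ts : Fin k → ℝ)
      (ξ : Fin k → EuclideanSpace ℝ (Fin d)), (∀ j, ts j ∈ Set.Icc 0 T) →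
      ∫ ω, Complex.exp (Complex.I * (∑ j, (inner ℝ (ξ j) (B (ns j) (ts j) ω) : ℝ))) ∂P
        = Complex.exp (-(1 / 2 : ℂ) * ∑ j, ∑ j',
            if ns j = ns j' then
              (((inner ℝ (ξ j) (ξ j') : ℝ) * fbmCov (Hs (ns j)) (ts j) (ts j') : ℝ) : ℂ)
            else 0)

/-- The regularizing fractional Brownian motion `𝔹^H_t = ∑ₙ λₙ B_t^{Hₙ,n}`. -/
def regFBM {Ω : Type*} {d : ℕ} (lam : ℕ → ℝ) (B : ℕ → ℝ → Ω → EuclideanSpace ℝ (Fin d)) :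
    ℝ → Ω → EuclideanSpace ℝ (Fin d) :=
  fun t ω => ∑' n, lam n • B n t ω

open ProbabilityTheory Topology

lemma Real.rpow_le_one_add {t e : ℝ} (ht : 0 ≤ t) (he0 : 0 ≤ e) (he1 : e ≤ 1) : t ^ e ≤ 1 + t := by
  rcases le_total t 1 with h | h
  · linarith [Real.rpow_le_one ht h he0]
  · calc t ^ e ≤ t ^ (1 : ℝ) := Real.rpow_le_rpow_of_exponent_le h he1
      _ ≤ 1 + t := by rw [Real.rpow_one]; linarith

lemma lintegral_enorm_gaussianReal_le (v : ℝ≥0) :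
    ∫⁻ x, ‖x‖ₑ ∂gaussianReal 0 v ≤ ENNReal.ofReal (1 + v) := by
  have hsq : Integrable (fun x : ℝ => x ^ 2) (gaussianReal 0 v) :=
    (memLp_id_gaussianReal 2).integrable_sq
  have hsecond : ∫ x, x ^ 2 ∂gaussianReal 0 v = v := by
    rw [← variance_of_integral_eq_zero aemeasurable_id' integral_id_gaussianReal,
      variance_fun_id_gaussianReal]
  calc ∫⁻ x, ‖x‖ₑ ∂gaussianReal 0 v ≤ ∫⁻ x, ENNReal.ofReal (1 + x ^ 2) ∂gaussianReal 0 v := by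
        refine lintegral_mono fun x => ?_
        rw [← ofReal_norm, Real.norm_eq_abs]
        exact ENNReal.ofReal_le_ofReal (by nlinarith [sq_abs x, abs_nonneg x])
    _ = ENNReal.ofReal (1 + v) := by
        have hint : Integrable (fun x : ℝ => 1 + x ^ 2) (gaussianReal 0 v) :=
          (integrable_const 1).add hsq
        rw [← ofReal_integral_eq_lintegral_ofReal hint (ae_of_all _ fun x => by positivity),
          integral_add (integrable_const 1) hsq, hsecond]
        simp

lemma gaussianReal_setOf_abs_le_le {v : ℝ≥0} (hv : v ≠ 0) (ε : ℝ) :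
    gaussianReal 0 v {x | |x| ≤ ε} ≤ ENNReal.ofReal (ε / √v) := by
  have hsqrt : 2 * √(v : ℝ) ≤ √(2 * π * v) := by
    rw [Real.sqrt_mul (by positivity), show (2 : ℝ) * √(v : ℝ) = √4 * √v by norm_num]
    gcongr
    linarith [pi_gt_three]
  have hdens : ∀ x, gaussianPDF 0 v x ≤ ENNReal.ofReal (2 * √v)⁻¹ := fun x => by
    refine ENNReal.ofReal_le_ofReal ?_
    calc (√(2 * π * v))⁻¹ * rexp (-(x - 0) ^ 2 / (2 * v)) ≤ (√(2 * π * v))⁻¹ * 1 := by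
          gcongr
          exact exp_le_one_iff.2 (div_nonpos_of_nonpos_of_nonneg (by nlinarith) (by positivity))
      _ ≤ (2 * √v)⁻¹ := by rw [mul_one]; gcongr
  calc gaussianReal 0 v {x | |x| ≤ ε} = ∫⁻ x in Icc (-ε) ε, gaussianPDF 0 v x := by
        simp_rw [abs_le]
        rw [gaussianReal_apply 0 hv]
        rfl
    _ ≤ ∫⁻ x in Icc (-ε) ε, ENNReal.ofReal (2 * √v)⁻¹ :=
        setLIntegral_mono' measurableSet_Icc fun x _ => hdens x
    _ = ENNReal.ofReal (ε / √v) := by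
        rw [setLIntegral_const, Real.volume_Icc, ← ENNReal.ofReal_mul (by positivity)]
        congr 1
        field_simp
        ring

section

variable {Ω : Type*} [MeasurableSpace Ω] {P : Measure Ω}

lemma hasLaw_gaussianReal_of_integral_cexp [IsFiniteMeasure P] {X : Ω → ℝ}
    (hX : AEMeasurable X P) {v : ℝ≥0}
    (h : ∀ s : ℝ, ∫ ω, Complex.exp (s * X ω * Complex.I) ∂P = Complex.exp (-(v * s ^ 2 / 2))) :
    HasLaw X (gaussianReal 0 v) P := by
  refine ⟨hX, Measure.ext_of_charFun (funext fun s => ?_)⟩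
  rw [charFun_apply_real, integral_map hX (by fun_prop), h, charFun_gaussianReal]
  simp

lemma tendsto_integral_cexp_of_ae_tendsto [IsFiniteMeasure P] {X : ℕ → Ω → ℝ} {Y : Ω → ℝ}
    (hX : ∀ N, AEMeasurable (X N) P)
    (hlim : ∀ᵐ ω ∂P, Tendsto (fun N => X N ω) atTop (𝓝 (Y ω))) (s : ℝ) :
    Tendsto (fun N => ∫ ω, Complex.exp (s * X N ω * Complex.I) ∂P) atTop
      (𝓝 (∫ ω, Complex.exp (s * Y ω * Complex.I) ∂P)) := by
  have hcont : Continuous fun x : ℝ => Complex.exp (s * x * Complex.I) := by fun_prop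
  refine tendsto_integral_of_dominated_convergence (fun _ => 1)
    (fun N => hcont.comp_aestronglyMeasurable (hX N).aestronglyMeasurable)
    (integrable_const 1) (fun N => ae_of_all _ fun ω => ?_) ?_
  · rw [← Complex.ofReal_mul, Complex.norm_exp_ofReal_mul_I]
  · filter_upwards [hlim] with ω hω
    exact (hcont.tendsto _).comp hω

lemma ae_summable_of_tsum_lintegral_enorm_ne_top {E : Type*} [NormedAddCommGroup E]
    [CompleteSpace E] {f : ℕ → Ω → E} (hf : ∀ n, AEStronglyMeasurable (f n) P)
    (h : ∑' n, ∫⁻ ω, ‖f n ω‖ₑ ∂P ≠ ∞) : ∀ᵐ ω ∂P, Summable fun n => f n ω := by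
  rw [← lintegral_tsum fun n => (hf n).enorm] at h
  filter_upwards [ae_lt_top' (AEMeasurable.tsum fun n => (hf n).enorm) h] with ω hω
  exact Summable.of_nnnorm (ENNReal.tsum_coe_ne_top_iff_summable.1 hω.ne)

end

lemma fbmCov_self {H : ℝ} (hH : H ≠ 0) (t : ℝ) : fbmCov H t t = t ^ (2 * H) := by
  rw [fbmCov, sub_self, abs_zero, Real.zero_rpow (by simpa using hH)]
  ring

namespace IsRegFBM

variable {Ω : Type*} [MeasurableSpace Ω] {P : Measure Ω} {d : ℕ} {T : ℝ} {Hs lam : ℕ → ℝ}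
  {B : ℕ → ℝ → Ω → EuclideanSpace ℝ (Fin d)}

lemma integral_cexp_sum_coord (hreg : IsRegFBM d T P Hs lam B) {k : ℕ} {ns : Fin k → ℕ}
    (hns : ns.Injective) {ts : Fin k → ℝ} (hts : ∀ j, ts j ∈ Icc 0 T) (c : Fin k → ℝ)
    (i : Fin d) :
    ∫ ω, Complex.exp ((∑ j, c j * B (ns j) (ts j) ω i : ℝ) * Complex.I) ∂P
      = Complex.exp (-((∑ j, c j ^ 2 * ts j ^ (2 * Hs (ns j)) : ℝ) / 2)) := by
  have h := hreg.charFun k ns ts (fun j => EuclideanSpace.single i (c j)) hts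
  simp only [EuclideanSpace.inner_single_left, PiLp.single_apply, hns.eq_iff,
    Finset.sum_ite_eq, Finset.mem_univ, if_true, conj_trivial, fbmCov_self (hreg.Hmem _).1.ne'] at h
  simp_rw [mul_comm _ Complex.I, h]
  push_cast
  ring_nf

lemma measurable_coord (hreg : IsRegFBM d T P Hs lam B) (n : ℕ) (t : ℝ) (i : Fin d) :
    Measurable fun ω => B n t ω i := by
  have := hreg.meas n t
  fun_prop

lemma hasLaw_coord [IsFiniteMeasure P] (hreg : IsRegFBM d T P Hs lam B) (n : ℕ) {t : ℝ}
    (ht : t ∈ Icc 0 T) (i : Fin d) :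
    HasLaw (fun ω => B n t ω i) (gaussianReal 0 (t ^ (2 * Hs n)).toNNReal) P := by
  refine hasLaw_gaussianReal_of_integral_cexp (hreg.measurable_coord n t i).aemeasurable
    fun s => ?_
  have h := hreg.integral_cexp_sum_coord (ns := fun _ : Fin 1 => n)
    (fun _ _ _ => Subsingleton.elim _ _) (fun _ => ht) (fun _ => s) i
  rw [Real.coe_toNNReal _ (rpow_nonneg ht.1 _)]
  simp only [Finset.univ_unique, Finset.sum_singleton] at h
  push_cast at h ⊢
  rw [h]
  ring_nf

lemma integral_cexp_partialSum (hreg : IsRegFBM d T P Hs lam B) {t : ℝ} (ht : t ∈ Icc 0 T)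
    (i : Fin d) (N : ℕ) (s : ℝ) :
    ∫ ω, Complex.exp (s * (∑ n ∈ Finset.range N, lam n * B n t ω i : ℝ) * Complex.I) ∂P
      = Complex.exp (-((∑ n ∈ Finset.range N, lam n ^ 2 * t ^ (2 * Hs n) : ℝ) * s ^ 2 / 2)) := by
  have h := hreg.integral_cexp_sum_coord (k := N) (ns := Fin.val) Fin.val_injective
    (fun _ => ht) (fun j => s * lam j) i
  have hsum : ∀ ω, s * ∑ n ∈ Finset.range N, lam n * B n t ω i
      = ∑ j : Fin N, s * lam j * B j t ω i := fun ω => by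
    rw [Finset.mul_sum, ← Fin.sum_univ_eq_sum_range (fun n => s * (lam n * B n t ω i))]
    simp only [mul_assoc]
  simp_rw [← Complex.ofReal_mul, hsum, h, Fin.sum_univ_eq_sum_range
    (fun n => (s * lam n) ^ 2 * t ^ (2 * Hs n))]
  simp_rw [mul_pow, mul_assoc, ← Finset.mul_sum]
  push_cast
  ring_nf

lemma ae_summable [IsFiniteMeasure P] (hreg : IsRegFBM d T P Hs lam B) {t : ℝ}
    (ht : t ∈ Icc 0 T) : ∀ᵐ ω ∂P, Summable fun n => lam n • B n t ω := by
  have hlam : ∑' n, ‖lam n‖ₑ ≠ ∞ := ENNReal.tsum_coe_ne_top_iff_summable.2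
    (NNReal.summable_coe.1 (by simpa [Real.norm_eq_abs] using hreg.lam_summable))
  have hmoment : ∀ n i, ∫⁻ ω, ‖B n t ω i‖ₑ ∂P ≤ ENNReal.ofReal (2 + T) := fun n i => by
    rw [(hreg.hasLaw_coord n ht i).lintegral_comp (f := fun x : ℝ => ‖x‖ₑ) (by fun_prop)]
    refine (lintegral_enorm_gaussianReal_le _).trans (ENNReal.ofReal_le_ofReal ?_)
    rw [Real.coe_toNNReal _ (rpow_nonneg ht.1 _)]
    have := rpow_le_one_add (e := 2 * Hs n) ht.1 (by linarith [(hreg.Hmem n).1])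
      (by linarith [(hreg.Hmem n).2])
    linarith [ht.2]
  have hcoord : ∀ i, ∀ᵐ ω ∂P, Summable fun n => lam n * B n t ω i := fun i => by
    refine ae_summable_of_tsum_lintegral_enorm_ne_top
      (fun n => ((hreg.measurable_coord n t i).const_mul _).aestronglyMeasurable)
      (ne_top_of_le_ne_top (ENNReal.mul_ne_top hlam (ENNReal.ofReal_ne_top (r := 2 + T))) ?_)
    rw [← ENNReal.tsum_mul_right]
    refine ENNReal.tsum_le_tsum fun n => ?_
    simp_rw [enorm_mul]
    rw [lintegral_const_mul' _ _ enorm_ne_top]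
    exact mul_le_mul_right (hmoment n i) _
  filter_upwards [ae_all_iff.2 hcoord] with ω hω
  exact (EuclideanSpace.equiv (Fin d) ℝ).summable.1 (Pi.summable.2 hω)

lemma ae_tendsto_partialSum_coord [IsFiniteMeasure P] (hreg : IsRegFBM d T P Hs lam B) {t : ℝ}
    (ht : t ∈ Icc 0 T) (i : Fin d) :
    ∀ᵐ ω ∂P, Tendsto (fun N => ∑ n ∈ Finset.range N, lam n * B n t ω i) atTop
      (𝓝 (regFBM lam B t ω i)) := by
  filter_upwards [hreg.ae_summable ht] with ω hω
  simpa [regFBM, Function.comp_def, WithLp.ofLp_sum] using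
    ((EuclideanSpace.proj i).continuous.tendsto _).comp hω.hasSum.tendsto_sum_nat

lemma summable_variance (hreg : IsRegFBM d T P Hs lam B) {t : ℝ} (ht : t ∈ Icc 0 T) :
    Summable fun n => lam n ^ 2 * t ^ (2 * Hs n) := by
  refine Summable.of_nonneg_of_le (fun n => mul_nonneg (sq_nonneg _) (rpow_nonneg ht.1 _))
    (fun n => ?_) (hreg.lam_summable.mul_right ((∑' m, |lam m|) * (1 + T)))
  have hlam : |lam n| ≤ ∑' m, |lam m| := hreg.lam_summable.le_tsum n fun m _ => abs_nonneg _
  have ht' : t ^ (2 * Hs n) ≤ 1 + T :=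
    (rpow_le_one_add (e := 2 * Hs n) ht.1 (by linarith [(hreg.Hmem n).1])
      (by linarith [(hreg.Hmem n).2])).trans (by linarith [ht.2])
  rw [← sq_abs, sq, mul_assoc]
  have := rpow_nonneg ht.1 (2 * Hs n)
  gcongr

lemma hasLaw_regFBM_coord [IsFiniteMeasure P] (hreg : IsRegFBM d T P Hs lam B) {t : ℝ}
    (ht : t ∈ Icc 0 T) (i : Fin d) :
    HasLaw (fun ω => regFBM lam B t ω i)
      (gaussianReal 0 (∑' n, lam n ^ 2 * t ^ (2 * Hs n)).toNNReal) P := by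
  have hmeas : ∀ N, AEMeasurable (fun ω => ∑ n ∈ Finset.range N, lam n * B n t ω i) P :=
    fun N => (Finset.measurable_sum _ fun n _ =>
      (hreg.measurable_coord n t i).const_mul _).aemeasurable
  have hlim := hreg.ae_tendsto_partialSum_coord ht i
  refine hasLaw_gaussianReal_of_integral_cexp (aemeasurable_of_tendsto_metrizable_ae' hmeas hlim)
    fun s => tendsto_nhds_unique (tendsto_integral_cexp_of_ae_tendsto hmeas hlim s) ?_
  rw [Real.coe_toNNReal _ (tsum_nonneg fun n => mul_nonneg (sq_nonneg _) (rpow_nonneg ht.1 _))]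
  simp_rw [hreg.integral_cexp_partialSum ht i]
  exact ((by fun_prop : Continuous fun v : ℝ => Complex.exp (-(v * s ^ 2 / 2))).tendsto _).comp
    (hreg.summable_variance ht).hasSum.tendsto_sum_nat

lemma ae_regFBM_zero [IsFiniteMeasure P] (hreg : IsRegFBM d T P Hs lam B) (hT : 0 ≤ T) :
    ∀ᵐ ω ∂P, regFBM lam B 0 ω = 0 := by
  have hcoord : ∀ i, ∀ᵐ ω ∂P, regFBM lam B 0 ω i = 0 := fun i => by
    have h := hreg.hasLaw_regFBM_coord ⟨le_rfl, hT⟩ i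
    have hzero : ∀ n, (0 : ℝ) ^ (2 * Hs n) = 0 := fun n =>
      zero_rpow (by linarith [(hreg.Hmem n).1])
    simp only [hzero, mul_zero, tsum_zero, Real.toNNReal_zero, gaussianReal_zero_var] at h
    exact h.ae_eq_of_dirac
  filter_upwards [ae_all_iff.2 hcoord] with ω hω
  ext i
  exact hω i

lemma measure_abs_regFBM_coord_le [IsFiniteMeasure P] (hreg : IsRegFBM d T P Hs lam B) {t : ℝ}
    (ht : t ∈ Ioc 0 T) {m : ℕ} (hm : lam m ≠ 0) (i : Fin d) {ε : ℝ} (hε : 0 ≤ ε) :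
    P {ω | |regFBM lam B t ω i| ≤ ε} ≤ ENNReal.ofReal (ε / (|lam m| * t ^ Hs m)) := by
  set V := ∑' n, lam n ^ 2 * t ^ (2 * Hs n)
  have hpos : 0 < |lam m| * t ^ Hs m := mul_pos (abs_pos.2 hm) (rpow_pos_of_pos ht.1 _)
  have hV : (|lam m| * t ^ Hs m) ^ 2 ≤ V := by
    have hsq : (t ^ Hs m) ^ 2 = t ^ (2 * Hs m) := by
      rw [← rpow_natCast, ← rpow_mul ht.1.le]
      ring_nf
    rw [mul_pow, sq_abs, hsq]
    exact (hreg.summable_variance (Ioc_subset_Icc_self ht)).le_tsum m fun n _ =>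
      mul_nonneg (sq_nonneg _) (rpow_nonneg ht.1.le _)
  have hV0 : V.toNNReal ≠ 0 := by
    simpa using (pow_pos hpos 2).trans_le hV
  rw [(hreg.hasLaw_regFBM_coord (Ioc_subset_Icc_self ht) i).measure_eq (p := fun x => |x| ≤ ε)
    (measurableSet_le (by fun_prop) measurable_const)]
  refine (gaussianReal_setOf_abs_le_le hV0 ε).trans (ENNReal.ofReal_le_ofReal ?_)
  rw [Real.coe_toNNReal _ ((sq_nonneg _).trans hV)]
  exact div_le_div_of_nonneg_left hε hpos ((Real.le_sqrt hpos.le (hV.trans' (sq_nonneg _))).2 hV)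

lemma measure_forall_abs_regFBM_coord_le_eq_zero [IsFiniteMeasure P]
    (hreg : IsRegFBM d T P Hs lam B) {m : ℕ} (hm : lam m ≠ 0) {γ : ℝ} (hγ : Hs m < γ)
    {t : ℕ → ℝ} (ht : ∀ j, t j ∈ Ioc 0 T) (ht0 : Tendsto t atTop (𝓝 0)) (i : Fin d) {C : ℝ}
    (hC : 0 ≤ C) : P {ω | ∀ j, |regFBM lam B (t j) ω i| ≤ C * t j ^ γ} = 0 := by
  have hbound : ∀ j, P {ω | ∀ k, |regFBM lam B (t k) ω i| ≤ C * t k ^ γ}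
      ≤ ENNReal.ofReal (C / |lam m| * t j ^ (γ - Hs m)) := fun j => by
    refine (measure_mono (ofPred_subset_ofPred.2 fun ω hω => hω j)).trans
      ((hreg.measure_abs_regFBM_coord_le (ht j) hm i
        (mul_nonneg hC (rpow_nonneg (ht j).1.le _))).trans_eq ?_)
    rw [rpow_sub (ht j).1]
    field_simp
  have hlim : Tendsto (fun j => ENNReal.ofReal (C / |lam m| * t j ^ (γ - Hs m))) atTop (𝓝 0) := by
    have h := (continuousAt_rpow_const 0 (γ - Hs m) (Or.inr (sub_pos.2 hγ).le)).tendsto.comp ht0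
    rw [zero_rpow (sub_pos.2 hγ).ne'] at h
    simpa using ENNReal.tendsto_ofReal (h.const_mul (C / |lam m|))
  exact le_antisymm (ge_of_tendsto' hlim hbound) zero_le

lemma exists_hurst_lt (hreg : IsRegFBM d T P Hs lam B) {γ : ℝ} (hγ : 0 < γ) :
    ∃ m, lam m ≠ 0 ∧ Hs m < γ := by
  obtain ⟨N, hN⟩ := (hreg.Hlim.eventually (gt_mem_nhds hγ)).exists_forall_of_atTop
  obtain ⟨m, hm, hNm⟩ := hreg.lam_inf.exists_gt N
  exact ⟨m, hm, hN m hNm.le⟩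

end IsRegFBM

/-- `𝔹^H` admits no Hölder continuous modification of any positive
order: for every `γ ∈ (0,1]` there is no process `Y` with `P(Y_t = 𝔹^H_t) = 1` for
every `t ∈ [0,T]` whose sample paths are a.s. `γ`-Hölder continuous on `[0,T]`. -/
theorem statement7 (d : ℕ) (hd : 1 ≤ d) (T : ℝ) (hT : 0 < T)
    {Ω : Type*} [MeasurableSpace Ω] (P : Measure Ω) [IsProbabilityMeasure P]
    (Hs lam : ℕ → ℝ) (B : ℕ → ℝ → Ω → EuclideanSpace ℝ (Fin d))
    (hreg : IsRegFBM d T P Hs lam B) :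
    ∀ γ : ℝ, 0 < γ → γ ≤ 1 →
      ¬ ∃ Y : ℝ → Ω → EuclideanSpace ℝ (Fin d),
          (∀ t ∈ Set.Icc (0 : ℝ) T, ∀ᵐ ω ∂P, Y t ω = regFBM lam B t ω) ∧
          (∀ᵐ ω ∂P, ∃ C : ℝ≥0,
            HolderOnWith C γ.toNNReal (fun t => Y t ω) (Set.Icc (0 : ℝ) T)) := by
  rintro γ hγ - ⟨Y, hmod, hHolder⟩
  obtain ⟨m, hm, hHm⟩ := hreg.exists_hurst_lt hγ
  let i : Fin d := ⟨0, hd⟩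
  let t : ℕ → ℝ := fun j => T / (j + 1)
  have ht : ∀ j, t j ∈ Ioc 0 T := fun j =>
    ⟨by positivity, div_le_self hT.le (by linarith [j.cast_nonneg (α := ℝ)])⟩
  have ht0 : Tendsto t atTop (𝓝 0) := by
    simpa [t, Function.comp_def] using
      (tendsto_const_div_atTop_nhds_zero_nat T).comp (tendsto_add_atTop_nat 1)
  have h0 : (0 : ℝ) ∈ Icc 0 T := ⟨le_rfl, hT.le⟩
  have hbounded : ∀ᵐ ω ∂P, ∃ K : ℕ, ∀ j, |regFBM lam B (t j) ω i| ≤ K * t j ^ γ := by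
    filter_upwards [hHolder, ae_all_iff.2 fun j => hmod (t j) (Ioc_subset_Icc_self (ht j)),
      hmod 0 h0, hreg.ae_regFBM_zero hT.le] with ω ⟨C, hC⟩ hYt hY0 hB0
    refine ⟨⌈(C : ℝ)⌉₊, fun j => ?_⟩
    calc |regFBM lam B (t j) ω i| ≤ dist (Y (t j) ω) (Y 0 ω) := by
          rw [hYt j, hY0, hB0, dist_zero_right, ← Real.norm_eq_abs]
          exact PiLp.norm_apply_le _ i
      _ ≤ C * dist (t j) 0 ^ (γ.toNNReal : ℝ) := hC.dist_le (Ioc_subset_Icc_self (ht j)) h0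
      _ ≤ ⌈(C : ℝ)⌉₊ * t j ^ γ := by
          rw [Real.coe_toNNReal _ hγ.le, Real.dist_0_eq_abs, abs_of_pos (ht j).1]
          have := (ht j).1
          gcongr
          exact Nat.le_ceil _
  have hnull : P {ω | ∃ K : ℕ, ∀ j, |regFBM lam B (t j) ω i| ≤ K * t j ^ γ} = 0 := by
    rw [ofPred_exists]
    exact measure_iUnion_null fun K =>
      hreg.measure_forall_abs_regFBM_coord_le_eq_zero hm hHm ht ht0 i K.cast_nonneg
  obtain ⟨ω, hω, hω'⟩ := (hbounded.and (measure_eq_zero_iff_ae_notMem.1 hnull)).exists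
  exact hω' hω
end
end

section
/- Let k ≥ 1 and m_1,…,m_k ∈ ℕ, and set m_{1:j} := m_1 + ⋯ + m_j with m_{1:0} := 0. Let f_i : [0,T] → [0,∞), i = 1,…,m_{1:k}, be integrable functions and t_0 < t in [0,T]. Then Π_{i=0}^{k−1} ∫_{Δ^{m_{i+1}}_{t_0,t}} f_{m_{1:i}+1}(s_{m_{1:i}+1}) ⋯ f_{m_{1:i+1}}(s_{m_{1:i+1}}) ds_{m_{1:i}+1} ⋯ ds_{m_{1:i+1}} = Σ_{σ : σ^{-1} ∈ S(m_1,…,m_k)} ∫_{Δ^{m_{1:k}}_{t_0,t}} Π_{i=1}^{m_{1:k}} f_{σ(i)}(w_i) dw_1 ⋯ dw_{m_{1:k}}. -/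
/-!
Embed `Δ^{m_0} × ⋯ × Δ^{m_{k-1}}` in `ℝ^M`, `M = m_0 + ⋯ + m_{k-1}`, as the set of points of
`(t₀, t)^M` that increase on each of the consecutive blocks of lengths `m_0, …, m_{k-1}`; by
Fubini the product of the simplex integrals is the integral over this set. Almost every point
has distinct coordinates, and such a point is block-increasing exactly when the permutation
`σ` sorting it has `σ⁻¹` increasing on each block. So the set is, up to a null set, the disjoint
union over shuffles `σ⁻¹` of the permuted simplices `{x | x ∘ σ ∈ Δ^M}`, and permuting
coordinates turns each piece into the simplex integral of the permuted integrand.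
-/

open MeasureTheory Real Filter Set
open scoped ENNReal NNReal BigOperators Classical

noncomputable section

/-- The `m`-dimensional open simplex `Δ^m_{θ,t}` of increasing tuples. -/
def simplex (m : ℕ) (θ t : ℝ) : Set (Fin m → ℝ) :=
  {s | StrictMono s ∧ ∀ j, s j ∈ Set.Ioo θ t}

/-- Shuffle permutations `S(m_0, …, m_{k-1})` (blocks indexed from `0`):
permutations of `{0, …, m_0 + ⋯ + m_{k-1} - 1}` that are increasing on each of the
consecutive blocks of lengths `m 0, …, m (k-1)`. -/
def IsShuffle (k : ℕ) (m : ℕ → ℕ) (σ : Equiv.Perm (Fin (∑ i ∈ Finset.range k, m i))) :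
    Prop :=
  ∀ i < k, ∀ a b : Fin (∑ i ∈ Finset.range k, m i),
    (∑ l ∈ Finset.range i, m l) ≤ (a : ℕ) → (b : ℕ) < ∑ l ∈ Finset.range (i + 1), m l →
    (a : ℕ) < (b : ℕ) → σ a < σ b

theorem measurePreserving_finAppend (N n : ℕ) :
    MeasurePreserving (fun p : (Fin N → ℝ) × (Fin n → ℝ) => Fin.append p.1 p.2) := by
  have h := (volume_measurePreserving_piCongrLeft (fun _ => ℝ) finSumFinEquiv).comp
    (volume_measurePreserving_sumPiEquivProdPi_symm (fun _ : Fin N ⊕ Fin n => ℝ))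
  have happend : (fun p : (Fin N → ℝ) × (Fin n → ℝ) => Fin.append p.1 p.2) =
      (MeasurableEquiv.piCongrLeft (fun _ => ℝ) finSumFinEquiv) ∘
        (MeasurableEquiv.sumPiEquivProdPi fun _ => ℝ).symm := by
    funext p i
    refine Fin.addCases (fun j => ?_) (fun j => ?_) i
    · rw [Fin.append_left]
      exact (Equiv.piCongrLeft_apply_apply (fun _ => ℝ) finSumFinEquiv
        ((Equiv.sumPiEquivProdPi fun _ => ℝ).symm p) (Sum.inl j)).symm
    · rw [Fin.append_right]
      exact (Equiv.piCongrLeft_apply_apply (fun _ => ℝ) finSumFinEquiv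
        ((Equiv.sumPiEquivProdPi fun _ => ℝ).symm p) (Sum.inr j)).symm
  rw [happend]
  exact h

theorem measurableEmbedding_finAppend (N n : ℕ) :
    MeasurableEmbedding (fun p : (Fin N → ℝ) × (Fin n → ℝ) => Fin.append p.1 p.2) :=
  (Fin.appendHomeomorph N n).toMeasurableEquiv.measurableEmbedding

theorem setIntegral_finAppend_prod {N n : ℕ} (g : Fin (N + n) → ℝ → ℝ) {A : Set (Fin N → ℝ)}
    {B : Set (Fin n → ℝ)} {C : Set (Fin (N + n) → ℝ)}
    (hC : ∀ x y, Fin.append x y ∈ C ↔ x ∈ A ∧ y ∈ B) :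
    ∫ z in C, ∏ c, g c (z c) =
      (∫ x in A, ∏ i, g (Fin.castAdd n i) (x i)) * ∫ y in B, ∏ j, g (Fin.natAdd N j) (y j) := by
  have hpre : (fun p : (Fin N → ℝ) × (Fin n → ℝ) => Fin.append p.1 p.2) ⁻¹' C = A ×ˢ B := by
    ext ⟨x, y⟩
    exact hC x y
  rw [← setIntegral_prod_mul, ← hpre, ← (measurePreserving_finAppend N n).setIntegral_preimage_emb
    (measurableEmbedding_finAppend N n)]
  simp only [Fin.prod_univ_add, Fin.append_left, Fin.append_right]
  rfl

theorem setIntegral_preimage_comp_perm {ι : Type*} [Fintype ι] (σ : Equiv.Perm ι)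
    (F : (ι → ℝ) → ℝ) (S : Set (ι → ℝ)) :
    ∫ x in (fun x => x ∘ σ) ⁻¹' S, F (x ∘ σ) = ∫ w in S, F w :=
  (volume_preserving_arrowCongr' σ.symm (MeasurableEquiv.refl ℝ) (.id _)).setIntegral_preimage_emb
    (MeasurableEquiv.arrowCongr' σ.symm (MeasurableEquiv.refl ℝ)).measurableEmbedding F S

theorem volume_setOf_apply_eq_apply {ι : Type*} [Fintype ι] {a b : ι} (hab : a ≠ b) :
    volume {x : ι → ℝ | x a = x b} = 0 := by
  let L : (ι → ℝ) →ₗ[ℝ] ℝ := LinearMap.proj (R := ℝ) (φ := fun _ => ℝ) a - LinearMap.proj b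
  have hker : {x : ι → ℝ | x a = x b} = (LinearMap.ker L : Set (ι → ℝ)) := by
    ext x
    simp [L, sub_eq_zero]
  rw [hker]
  refine Measure.addHaar_submodule _ _ fun htop => ?_
  have : Pi.single a 1 ∈ LinearMap.ker L := htop ▸ Submodule.mem_top
  simp [L, hab.symm] at this

theorem ae_injective {ι : Type*} [Fintype ι] : ∀ᵐ x : ι → ℝ, Function.Injective x := by
  have hpair : ∀ a b : ι, ∀ᵐ x : ι → ℝ, x a = x b → a = b := by
    intro a b
    by_cases hab : a = b
    · exact Filter.Eventually.of_forall fun _ _ => hab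
    · exact measure_mono_null (fun x hx => (Classical.not_imp.1 hx).1) (volume_setOf_apply_eq_apply hab)
  simpa only [Function.Injective, ae_all_iff] using hpair

theorem Equiv.Perm.eq_of_strictMono_comp {M : ℕ} {α : Type*} [PartialOrder α] {x : Fin M → α}
    {σ τ : Equiv.Perm (Fin M)}
    (hσ : StrictMono (x ∘ σ)) (hτ : StrictMono (x ∘ τ)) : σ = τ := by
  have hx : x ∘ σ = x ∘ τ := Tuple.unique_monotone hσ.monotone hτ.monotone
  refine Equiv.ext fun j => ?_
  have : (x ∘ σ) (σ⁻¹ (τ j)) = (x ∘ σ) j := by simpa using (congrFun hx j).symm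
  simpa using (congrArg σ (hσ.injective this)).symm

theorem measurableSet_simplex (n : ℕ) (θ t : ℝ) : MeasurableSet (simplex n θ t) :=
  measurableSet_setOfPred.2 (by
    unfold StrictMono
    fun_prop (disch := exact measurableSet_Ioo))

theorem setIntegral_simplex_prod_indicator (n : ℕ) (θ t : ℝ) (g : Fin n → ℝ → ℝ) :
    ∫ s in simplex n θ t, ∏ j, (Set.Ioo θ t).indicator (g j) (s j) =
      ∫ s in simplex n θ t, ∏ j, g j (s j) :=
  setIntegral_congr_fun (measurableSet_simplex n θ t) fun _ hs =>
    Finset.prod_congr rfl fun j _ => Set.indicator_of_mem (hs.2 j) _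

/-- `IsShuffle k m σ` is `StrictMonoOnBlocks k m σ`, here for tuples of any length and values. -/
def StrictMonoOnBlocks {M : ℕ} {α : Type*} [Preorder α] (k : ℕ) (m : ℕ → ℕ) (g : Fin M → α) :
    Prop :=
  ∀ i < k, ∀ a b : Fin M,
    (∑ l ∈ Finset.range i, m l) ≤ (a : ℕ) → (b : ℕ) < ∑ l ∈ Finset.range (i + 1), m l →
    (a : ℕ) < (b : ℕ) → g a < g b

theorem strictMonoOnBlocks_comp_iff {M k : ℕ} {m : ℕ → ℕ} {α β : Type*} [LinearOrder α]
    [Preorder β] {h : α → β} (hh : StrictMono h) (g : Fin M → α) :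
    StrictMonoOnBlocks k m (h ∘ g) ↔ StrictMonoOnBlocks k m g := by
  simp only [StrictMonoOnBlocks, Function.comp_apply, hh.lt_iff_lt]

theorem strictMonoOnBlocks_finAppend_iff {α : Type*} [Preorder α] (k : ℕ) (m : ℕ → ℕ)
    (x : Fin (∑ i ∈ Finset.range k, m i) → α) (y : Fin (m k) → α) :
    StrictMonoOnBlocks (k + 1) m (Fin.append x y) ↔ StrictMonoOnBlocks k m x ∧ StrictMono y := by
  have hsum : ∀ i ≤ k, ∑ l ∈ Finset.range i, m l ≤ ∑ l ∈ Finset.range k, m l := fun i hi =>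
    Finset.sum_le_sum_of_subset (Finset.range_subset_range.2 hi)
  have hsucc := Finset.sum_range_succ m k
  constructor
  · intro h
    refine ⟨fun i hi a b ha hb hab => ?_, fun a b hab => ?_⟩
    · simpa using h i (by omega) (Fin.castAdd _ a) (Fin.castAdd _ b) ha hb hab
    · simpa using h k k.lt_succ_self (Fin.natAdd _ a) (Fin.natAdd _ b) (by simp)
        (by simp [hsucc]) (by simpa using hab)
  · rintro ⟨hx, hy⟩ i hi a b ha hb hab
    rcases Nat.lt_succ_iff_lt_or_eq.1 hi with hik | rfl
    · have := hsum (i + 1) hik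
      induction a using Fin.addCases <;> induction b using Fin.addCases <;>
        simp only [Fin.val_castAdd, Fin.val_natAdd, Fin.append_left] at ha hb hab ⊢
      all_goals first | omega | exact hx i hik _ _ ha hb hab
    · induction a using Fin.addCases <;> induction b using Fin.addCases <;>
        simp only [Fin.val_castAdd, Fin.val_natAdd, Fin.append_right] at ha hb hab ⊢
      all_goals first | omega | exact hy (Fin.lt_def.2 (by omega))

def blockSimplex (M k : ℕ) (m : ℕ → ℕ) (θ t : ℝ) : Set (Fin M → ℝ) :=
  {x | StrictMonoOnBlocks k m x ∧ ∀ j, x j ∈ Set.Ioo θ t}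

theorem finAppend_mem_blockSimplex_iff (k : ℕ) (m : ℕ → ℕ) (θ t : ℝ)
    (x : Fin (∑ i ∈ Finset.range k, m i) → ℝ) (y : Fin (m k) → ℝ) :
    Fin.append x y ∈ blockSimplex _ (k + 1) m θ t ↔
      x ∈ blockSimplex _ k m θ t ∧ y ∈ simplex (m k) θ t := by
  simp only [blockSimplex, simplex, Set.mem_ofPred_eq, strictMonoOnBlocks_finAppend_iff,
    Fin.forall_fin_add, Fin.append_left, Fin.append_right]
  tauto

-- Stated for every `M` equal to the total length, so that the induction step can `subst` it.
theorem prod_setIntegral_simplex_eq_setIntegral_blockSimplex (m : ℕ → ℕ) (θ t : ℝ)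
    (G : ℕ → ℝ → ℝ) (k M : ℕ) (hM : ∑ i ∈ Finset.range k, m i = M) :
    ∏ i ∈ Finset.range k, ∫ s in simplex (m i) θ t, ∏ j : Fin (m i),
        G ((∑ l ∈ Finset.range i, m l) + (j : ℕ)) (s j) =
      ∫ x in blockSimplex M k m θ t, ∏ j : Fin M, G j (x j) := by
  induction k generalizing M with
  | zero =>
    rw [Finset.sum_range_zero] at hM
    subst hM
    simp [blockSimplex, StrictMonoOnBlocks, measureReal_def, volume_pi, Measure.pi_empty_univ]
  | succ k ih =>
    rw [Finset.sum_range_succ] at hM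
    subst hM
    rw [Finset.prod_range_succ, ih _ rfl,
      setIntegral_finAppend_prod (fun c => G c) (finAppend_mem_blockSimplex_iff k m θ t)]
    simp only [Fin.val_castAdd, Fin.val_natAdd]

theorem mem_blockSimplex_iff_exists_perm {M k : ℕ} {m : ℕ → ℕ} {θ t : ℝ} {x : Fin M → ℝ}
    (hx : Function.Injective x) :
    x ∈ blockSimplex M k m θ t ↔
      ∃ σ : Equiv.Perm (Fin M), StrictMonoOnBlocks k m ⇑σ⁻¹ ∧ x ∘ σ ∈ simplex M θ t := by
  have hblocks : ∀ σ : Equiv.Perm (Fin M), StrictMono (x ∘ σ) →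
      (StrictMonoOnBlocks k m x ↔ StrictMonoOnBlocks k m ⇑σ⁻¹) := fun σ hσ => by
    rw [← strictMonoOnBlocks_comp_iff hσ]
    simp [Function.comp_def]
  constructor
  · rintro ⟨hxb, hbox⟩
    have hsort : StrictMono (x ∘ Tuple.sort x) :=
      (Tuple.monotone_sort x).strictMono_of_injective (hx.comp (Tuple.sort x).injective)
    exact ⟨Tuple.sort x, (hblocks _ hsort).1 hxb, hsort, fun j => hbox _⟩
  · rintro ⟨σ, hσb, hσ, hbox⟩
    refine ⟨(hblocks σ hσ).2 hσb, fun j => ?_⟩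
    simpa using hbox (σ⁻¹ j)

theorem blockSimplex_ae_eq_biUnion (M k : ℕ) (m : ℕ → ℕ) (θ t : ℝ) :
    blockSimplex M k m θ t =ᵐ[volume]
      ⋃ σ ∈ Finset.univ.filter (fun σ : Equiv.Perm (Fin M) => StrictMonoOnBlocks k m ⇑σ⁻¹),
        (fun x => x ∘ σ) ⁻¹' simplex M θ t := by
  rw [Filter.eventuallyEq_set]
  filter_upwards [ae_injective] with x hx
  simp [mem_blockSimplex_iff_exists_perm hx]

theorem setIntegral_blockSimplex_eq_sum_shuffles (M k : ℕ) (m : ℕ → ℕ) (θ t : ℝ)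
    (G : ℕ → ℝ → ℝ) (hG : ∀ j : Fin M, Integrable (G j)) :
    ∫ x in blockSimplex M k m θ t, ∏ j : Fin M, G j (x j) =
      ∑ σ ∈ Finset.univ.filter (fun σ : Equiv.Perm (Fin M) => StrictMonoOnBlocks k m ⇑σ⁻¹),
        ∫ w in simplex M θ t, ∏ i, G (σ i) (w i) := by
  have hint : Integrable (fun x : Fin M → ℝ => ∏ j : Fin M, G j (x j)) :=
    Integrable.fintype_prod (f := fun j : Fin M => G j) hG
  have hdisj : Set.PairwiseDisjoint
      ↑(Finset.univ.filter (fun σ : Equiv.Perm (Fin M) => StrictMonoOnBlocks k m ⇑σ⁻¹))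
      (fun σ : Equiv.Perm (Fin M) => (fun x : Fin M → ℝ => x ∘ σ) ⁻¹' simplex M θ t) :=
    fun σ _ τ _ hne => Set.disjoint_left.2 fun _ hσ hτ =>
      hne (Equiv.Perm.eq_of_strictMono_comp hσ.1 hτ.1)
  rw [setIntegral_congr_set (blockSimplex_ae_eq_biUnion M k m θ t),
    integral_biUnion_finset _ (fun σ _ => (measurableSet_simplex M θ t).preimage (by fun_prop))
      hdisj fun _ _ => hint.integrableOn]
  refine Finset.sum_congr rfl fun σ _ => ?_
  rw [← setIntegral_preimage_comp_perm σ (fun w => ∏ i, G (σ i) (w i))]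
  congr 1 with x
  exact (Equiv.prod_comp σ fun j => G j (x j)).symm

theorem statement15_general (T : ℝ) (k : ℕ) (m : ℕ → ℕ) (f : ℕ → ℝ → ℝ)
    (hfint : ∀ i < ∑ l ∈ Finset.range k, m l, IntegrableOn (f i) (Set.Icc 0 T))
    (t₀ t : ℝ) (ht₀ : t₀ ∈ Set.Icc (0 : ℝ) T)
    (ht : t ∈ Set.Icc (0 : ℝ) T) :
    (∏ i ∈ Finset.range k,
        ∫ s in simplex (m i) t₀ t, ∏ j : Fin (m i),
          f ((∑ l ∈ Finset.range i, m l) + (j : ℕ)) (s j))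
      = ∑ σ ∈ Finset.univ.filter
            (fun σ : Equiv.Perm (Fin (∑ i ∈ Finset.range k, m i)) => IsShuffle k m σ⁻¹),
          ∫ w in simplex (∑ i ∈ Finset.range k, m i) t₀ t,
            ∏ i : Fin (∑ i ∈ Finset.range k, m i), f ((σ i : ℕ)) (w i) := by
  have hbox : Set.Ioo t₀ t ⊆ Set.Icc 0 T :=
    Set.Ioo_subset_Icc_self.trans (Set.Icc_subset_Icc ht₀.1 ht.2)
  -- Cutting `f` off outside `(t₀, t)` makes it integrable on `ℝ` and changes no simplex integral.
  set G : ℕ → ℝ → ℝ := fun c => (Set.Ioo t₀ t).indicator (f c)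
  have hG : ∀ j : Fin (∑ i ∈ Finset.range k, m i), Integrable (G j) := fun j =>
    ((hfint j j.2).mono_set hbox).integrable_indicator measurableSet_Ioo
  calc
    _ = ∏ i ∈ Finset.range k, ∫ s in simplex (m i) t₀ t, ∏ j : Fin (m i),
          G ((∑ l ∈ Finset.range i, m l) + (j : ℕ)) (s j) :=
      Finset.prod_congr rfl fun i _ => (setIntegral_simplex_prod_indicator _ _ _ _).symm
    _ = ∫ x in blockSimplex _ k m t₀ t, ∏ j : Fin (∑ i ∈ Finset.range k, m i), G j (x j) :=
      prod_setIntegral_simplex_eq_setIntegral_blockSimplex m t₀ t G k _ rfl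
    _ = ∑ σ ∈ Finset.univ.filter (fun σ => IsShuffle k m σ⁻¹),
          ∫ w in simplex _ t₀ t, ∏ i, G (σ i) (w i) :=
      setIntegral_blockSimplex_eq_sum_shuffles _ k m t₀ t G hG
    _ = _ := Finset.sum_congr rfl fun σ _ => setIntegral_simplex_prod_indicator _ _ _ _

/-- The shuffle identity: a product of `k` simplex integrals equals
the sum over shuffle permutations of a single simplex integral of the permuted
integrand.  (All indices are `0`-based, so `f i` corresponds to the paper's
`f_{i+1}`.) -/
theorem statement15 (T : ℝ) (hT : 0 < T) (k : ℕ) (hk : 1 ≤ k) (m : ℕ → ℕ)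
    (hm : ∀ i < k, 1 ≤ m i) (f : ℕ → ℝ → ℝ)
    (hfint : ∀ i < ∑ l ∈ Finset.range k, m l, IntegrableOn (f i) (Set.Icc 0 T))
    (hfnn : ∀ i x, 0 ≤ f i x) (t₀ t : ℝ) (ht₀ : t₀ ∈ Set.Icc (0 : ℝ) T)
    (ht : t ∈ Set.Icc (0 : ℝ) T) (h : t₀ < t) :
    (∏ i ∈ Finset.range k,
        ∫ s in simplex (m i) t₀ t, ∏ j : Fin (m i),
          f ((∑ l ∈ Finset.range i, m l) + (j : ℕ)) (s j))
      = ∑ σ ∈ Finset.univ.filter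
            (fun σ : Equiv.Perm (Fin (∑ i ∈ Finset.range k, m i)) => IsShuffle k m σ⁻¹),
          ∫ w in simplex (∑ i ∈ Finset.range k, m i) t₀ t,
            ∏ i : Fin (∑ i ∈ Finset.range k, m i), f ((σ i : ℕ)) (w i) :=
  statement15_general T k m f hfint t₀ t ht₀ ht
end
end
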